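/- arXiv:2505.15321 — 5 statements merged into one kernel-verified Lean document; each statement's English description precedes it below -/
import Mathlib

section
/- For every infinite-dimensional closed subspace H_0 of a separable Hilbert space H, there exists a complete minimal system {x_k}_{k=1}^∞ in H whose biorthogonal system {x_k*} has closed linear span exactly H_0. -/
/-
Take a Hilbert basis `(e_n)` of `H₀` and a dense sequence `(u_i)` in `H₀ᗮ`, and put
`x_n = e_n + v_n` where `v_n = u_{i(n)}` runs through every `u_i` infinitely often. Then `(e_n)` is
biorthogonal to `(x_n)`, so `(x_n)` is minimal, and the closed span of `(e_n)` is `H₀`. For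
completeness, let `g = p + q ⊥ x_n` for all `n`, with `p ∈ H₀`, `q ∈ H₀ᗮ`. Then
`⟪v_n, q⟫ = -⟪e_n, p⟫ → 0` by Bessel's inequality, and since every `u_i` recurs in `(v_n)`,
`⟪u_i, q⟫ = 0` for all `i`; hence `q = 0`, and then `⟪e_n, p⟫ = 0` for all `n` gives `p = 0`.
-/

open Filter Topology

noncomputable section

variable {H : Type*} [NormedAddCommGroup H] [InnerProductSpace ℂ H] [CompleteSpace H]

/-- Closed linear span of a set of vectors. -/
def clSpan (s : Set H) : Submodule ℂ H := (Submodule.span ℂ s).topologicalClosure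

instance (s : Set H) : CompleteSpace (clSpan s) :=
  (Submodule.isClosed_topologicalClosure _).completeSpace_coe

/-- Orthogonal projection onto the closed linear span of `s`, as a map `H → H`. -/
def projS (s : Set H) : H →L[ℂ] H :=
  (clSpan s).subtypeL ∘L (clSpan s).orthogonalProjection

/-- The system `x` is complete: its closed linear span is all of `H`. -/
def IsCompleteSystem (x : ℕ → H) : Prop := clSpan (Set.range x) = ⊤

/-- The system `x` is minimal: no vector lies in the closed span of the others. -/
def IsMinimalSystem (x : ℕ → H) : Prop :=
  ∀ k, x k ∉ clSpan (x '' {j | j ≠ k})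

/-- `y` is biorthogonal to `x`. -/
def IsBiorthogonal (x y : ℕ → H) : Prop :=
  ∀ k j, (inner ℂ (x k) (y j) : ℂ) = if k = j then 1 else 0

open Submodule Set

section InnerProductSpace

variable {ι 𝕜 E : Type*} [RCLike 𝕜] [NormedAddCommGroup E] [InnerProductSpace 𝕜 E]

theorem Orthonormal.countable [TopologicalSpace.SeparableSpace E] {v : ι → E}
    (hv : Orthonormal 𝕜 v) : Countable ι := by
  refine Pairwise.countable_of_isOpen_disjoint (s := fun i => Metric.ball (v i) (1 / 2))
    (fun i j hij => Metric.ball_disjoint_ball ?_) (fun _ => Metric.isOpen_ball)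
    (fun _ => Metric.nonempty_ball.2 one_half_pos)
  have hsq : ‖v i - v j‖ ^ 2 = 2 := by
    rw [@norm_sub_sq 𝕜, hv.norm_eq_one, hv.norm_eq_one, hv.inner_eq_zero hij]
    norm_num
  rw [dist_eq_norm]
  nlinarith [norm_nonneg (v i - v j)]

theorem HilbertBasis.finiteDimensional [Finite ι] (b : HilbertBasis ι 𝕜 E) :
    FiniteDimensional 𝕜 E := by
  cases nonempty_fintype ι
  exact Module.Finite.of_basis b.toOrthonormalBasis.toBasis

theorem exists_hilbertBasis_nat [CompleteSpace E] [TopologicalSpace.SeparableSpace E]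
    (h : ¬ FiniteDimensional 𝕜 E) : Nonempty (HilbertBasis ℕ 𝕜 E) := by
  obtain ⟨w, b, -⟩ := exists_hilbertBasis 𝕜 E
  have : Countable w := b.orthonormal.countable
  have : Infinite w := not_finite_iff_infinite.mp fun _ => h b.finiteDimensional
  obtain ⟨e⟩ := nonempty_equiv_of_countable (α := ℕ) (β := w)
  refine ⟨HilbertBasis.mk (b.orthonormal.comp e e.injective) ?_⟩
  rw [range_comp, e.range_eq_univ, image_univ]
  exact b.dense_span.ge

theorem HilbertBasis.topologicalClosure_span_range_coe {K : Submodule 𝕜 E}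
    (hK : IsClosed (K : Set E)) (b : HilbertBasis ι 𝕜 K) :
    (span 𝕜 (range fun i => (b i : E))).topologicalClosure = K := by
  refine le_antisymm (topologicalClosure_minimal _ ?_ hK) ?_
  · exact span_le.2 (range_subset_iff.2 fun i => (b i).2)
  · have hmap : span 𝕜 (range fun i => (b i : E)) = (span 𝕜 (range b)).map K.subtype := by
      rw [map_span, ← range_comp]
      rfl
    calc K = (span 𝕜 (range b)).topologicalClosure.map K.subtypeL := by
          rw [b.dense_span]; exact K.map_subtype_top.symm
      _ ≤ _ := by rw [hmap]; exact topologicalClosure_map K.subtypeL _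

theorem eq_zero_of_mem_topologicalClosure_span {s : Set E} {x : E}
    (hx : x ∈ (span 𝕜 s).topologicalClosure) (h : ∀ z ∈ s, inner 𝕜 z x = 0) : x = 0 := by
  have hx' : x ∈ (span 𝕜 s).topologicalClosureᗮ := by
    rw [orthogonal_closure, mem_orthogonal]
    intro u hu
    induction hu using span_induction with
    | mem z hz => exact h z hz
    | zero => exact inner_zero_left x
    | add a c _ _ ha hc => rw [inner_add_left, ha, hc, add_zero]
    | smul c a _ ha => rw [inner_smul_left, ha, mul_zero]
  simpa using (inf_orthogonal_eq_bot _).le ⟨hx, hx'⟩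

theorem Orthonormal.tendsto_inner_cofinite_zero {v : ι → E} (hv : Orthonormal 𝕜 v) (x : E) :
    Tendsto (fun i => inner 𝕜 (v i) x) cofinite (𝓝 0) := by
  rw [tendsto_zero_iff_norm_tendsto_zero]
  simpa [Real.sqrt_sq (norm_nonneg _)] using
    (hv.inner_products_summable x).tendsto_cofinite_zero.sqrt

theorem HilbertBasis.orthogonal_span_range_add_eq_bot [CompleteSpace E] {K : Submodule 𝕜 E}
    (hK : IsClosed (K : Set E)) (b : HilbertBasis ι 𝕜 K) {v : ι → E} (hv : ∀ i, v i ∈ Kᗮ)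
    (hrec : Kᗮ ≤ (span 𝕜 {z | ∃ᶠ i in cofinite, v i = z}).topologicalClosure) :
    (span 𝕜 (range fun i => (b i : E) + v i))ᗮ = ⊥ := by
  have : CompleteSpace K := hK.completeSpace_coe
  refine eq_bot_iff.2 fun g hg => (mem_bot 𝕜).2 ?_
  obtain ⟨p, hp, q, hq, rfl⟩ := K.exists_add_mem_mem_orthogonal g
  have hsplit : ∀ i, inner 𝕜 (b i : E) p + inner 𝕜 (v i) q = 0 := fun i => by
    have := (mem_orthogonal _ _).1 hg _ (subset_span ⟨i, rfl⟩)
    rwa [inner_add_left, inner_add_right, inner_add_right,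
      inner_right_of_mem_orthogonal (b i).2 hq, inner_left_of_mem_orthogonal hp (hv i),
      add_zero, zero_add] at this
  have hq0 : q = 0 := by
    refine eq_zero_of_mem_topologicalClosure_span (hrec hq) fun z hz => ?_
    have hlim : Tendsto (fun i => inner 𝕜 (v i) q) cofinite (𝓝 0) := by
      simpa [eq_neg_of_add_eq_zero_right (hsplit _)] using
        ((b.orthonormal.comp_linearIsometry K.subtypeₗᵢ).tendsto_inner_cofinite_zero p).neg
    exact tendsto_nhds_unique_of_frequently_eq tendsto_const_nhds hlim
      (hz.mono fun i hi => by rw [hi])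
  subst hq0
  have hp0 : p = 0 := by
    refine eq_zero_of_mem_topologicalClosure_span ((b.topologicalClosure_span_range_coe hK).ge hp) ?_
    rintro - ⟨i, rfl⟩
    simpa using hsplit i
  rw [hp0, add_zero]

theorem le_topologicalClosure_span_of_denseRange {K : Submodule 𝕜 E} {u : ι → K}
    (hu : DenseRange u) : K ≤ (span 𝕜 (range fun i => (u i : E))).topologicalClosure := by
  intro x hx
  have : x ∈ closure (range fun i => (u i : E)) := by
    rw [range_comp']
    exact (map_mem_closure continuous_subtype_val (hu ⟨x, hx⟩) fun y hy => ⟨y, hy, rfl⟩)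
  exact closure_subset_topologicalClosure_span _ this

end InnerProductSpace

theorem Nat.frequently_unpair_fst_eq {α : Type*} (f : ℕ → α) (i : ℕ) :
    ∃ᶠ n : ℕ in cofinite, f n.unpair.1 = f i := by
  rw [Nat.cofinite_eq_atTop, frequently_atTop]
  exact fun m => ⟨Nat.pair i m, Nat.right_le_pair i m, by rw [Nat.unpair_pair]⟩

theorem isBiorthogonal_add_of_orthonormal {E : Type*} [NormedAddCommGroup E]
    [InnerProductSpace ℂ E] {e v : ℕ → E} (he : Orthonormal ℂ e)
    (hv : ∀ k j, inner ℂ (v k) (e j) = 0) : IsBiorthogonal (e + v) e := fun k j => by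
  rw [Pi.add_apply, inner_add_left, hv, add_zero, orthonormal_iff_ite.1 he]

theorem IsBiorthogonal.isMinimalSystem {E : Type*} [NormedAddCommGroup E]
    [InnerProductSpace ℂ E] {x y : ℕ → E} (hxy : IsBiorthogonal x y) :
    IsMinimalSystem x := by
  intro k hk
  have hker : clSpan (x '' {j | j ≠ k}) ≤ (innerSL ℂ (y k)).ker := by
    refine topologicalClosure_minimal _ (span_le.2 ?_) (innerSL ℂ (y k)).isClosed_ker
    rintro - ⟨j, hj, rfl⟩
    rw [SetLike.mem_coe, LinearMap.mem_ker, ContinuousLinearMap.coe_coe, innerSL_apply_apply,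
      ← inner_conj_symm, hxy j k, if_neg hj, map_zero]
  have hyx := hker hk
  rw [LinearMap.mem_ker, ContinuousLinearMap.coe_coe, innerSL_apply_apply, ← inner_conj_symm,
    hxy k k, if_pos rfl, map_one] at hyx
  exact one_ne_zero hyx

theorem exists_complete_minimal_with_biorthogonal_span_general
    [TopologicalSpace.SeparableSpace H]
    (H₀ : Submodule ℂ H) (hcl : IsClosed (H₀ : Set H))
    (hinf : ¬ FiniteDimensional ℂ H₀) :
    ∃ x y : ℕ → H, IsCompleteSystem x ∧ IsMinimalSystem x ∧ IsBiorthogonal x y ∧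
      clSpan (Set.range y) = H₀ := by
  have := UniformSpace.secondCountable_of_separable H
  have : CompleteSpace H₀ := hcl.completeSpace_coe
  obtain ⟨b⟩ := exists_hilbertBasis_nat hinf
  obtain ⟨u, hu⟩ := TopologicalSpace.exists_dense_seq H₀ᗮ
  set e : ℕ → H := fun n => b n
  set v : ℕ → H := fun n => u n.unpair.1
  have hv : ∀ n, v n ∈ H₀ᗮ := fun n => (u _).2
  have hrec : H₀ᗮ ≤ (span ℂ {z | ∃ᶠ n in cofinite, v n = z}).topologicalClosure :=
    (le_topologicalClosure_span_of_denseRange hu).trans <| topologicalClosure_mono <| span_mono <|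
      range_subset_iff.2 fun i => Nat.frequently_unpair_fst_eq (fun n => (u n : H)) i
  have hbi : IsBiorthogonal (e + v) e := isBiorthogonal_add_of_orthonormal
    (b.orthonormal.comp_linearIsometry H₀.subtypeₗᵢ)
    fun k j => inner_left_of_mem_orthogonal (b j).2 (hv k)
  refine ⟨e + v, e, ?_, hbi.isMinimalSystem, hbi, b.topologicalClosure_span_range_coe hcl⟩
  exact topologicalClosure_eq_top_iff.2 (b.orthogonal_span_range_add_eq_bot hcl hv hrec)

/-- (Young) For every infinite-dimensional closed subspace `H₀` of a separable
infinite-dimensional Hilbert space `H`, there is a complete minimal system `{x_k}`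
whose biorthogonal system `{x_k^*}` has closed linear span exactly `H₀`. -/
theorem exists_complete_minimal_with_biorthogonal_span
    [TopologicalSpace.SeparableSpace H] (hH : ¬ FiniteDimensional ℂ H)
    (H₀ : Submodule ℂ H) (hcl : IsClosed (H₀ : Set H))
    (hinf : ¬ FiniteDimensional ℂ H₀) :
    ∃ x y : ℕ → H, IsCompleteSystem x ∧ IsMinimalSystem x ∧ IsBiorthogonal x y ∧
      clSpan (Set.range y) = H₀ :=
  exists_complete_minimal_with_biorthogonal_span_general H₀ hcl hinf
end
end

section
/- If the partition ℕ = N1 ⊔ N2 is changed in finitely many elements (moving a finite subset from N1 to N2 or vice versa), then the defect of the mixed system {x_k}_{k∈N1} ∪ {x_k*}_{k∈N2}, i.e., the dimension of the orthogonal complement of its closed linear span, does not change. -/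
/-!
Moving a single index `n ∉ N` into `N` suffices. Both mixed systems then arise from
`S = {x k | k ∈ N} ∪ {y k | k ∉ N, k ≠ n}` by adjoining one vector, `x n` or `y n`. Neither lies
in the closed span of `S`: the component of `y n` orthogonal to the closed span of the `y k` in
`S` is orthogonal to all of `S` but has inner product `1` with `x n`, and symmetrically for `y n`.
Adjoining a vector outside a closed subspace lowers the dimension of its orthogonal complement by
exactly one, and `+ 1` cancels in cardinal arithmetic, so the two defects agree.
-/

open Filter Topology

noncomputable section

variable {H : Type*} [NormedAddCommGroup H] [InnerProductSpace ℂ H] [CompleteSpace H]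

open Submodule
open scoped InnerProductSpace

section

variable {𝕜 E : Type*} [RCLike 𝕜] [NormedAddCommGroup E] [InnerProductSpace 𝕜 E]

theorem rank_inf_orthogonal_singleton_add_one {U : Submodule 𝕜 E} {u : E} (hu : u ∈ U)
    (hu₀ : u ≠ 0) : Module.rank 𝕜 ↥(U ⊓ (𝕜 ∙ u)ᗮ) + 1 = Module.rank 𝕜 U := by
  have hsup : (𝕜 ∙ u) ⊔ (𝕜 ∙ u)ᗮ ⊓ U = U :=
    sup_orthogonal_inf_of_hasOrthogonalProjection ((span_singleton_le_iff_mem _ _).2 hu)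
  have hinf : (𝕜 ∙ u) ⊓ ((𝕜 ∙ u)ᗮ ⊓ U) = ⊥ :=
    ((𝕜 ∙ u).orthogonal_disjoint.mono_right inf_le_left).eq_bot
  have hline : Module.rank 𝕜 (𝕜 ∙ u) = 1 :=
    Module.rank_eq_one_iff_finrank_eq_one.2 (finrank_span_singleton hu₀)
  have hrank := rank_sup_add_rank_inf_eq (𝕜 ∙ u) ((𝕜 ∙ u)ᗮ ⊓ U)
  rw [hsup, hinf, rank_bot, add_zero, hline, inf_comm] at hrank
  rw [hrank, add_comm]

variable [CompleteSpace E]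

theorem rank_orthogonal_span_insert_add_one {s : Set E} {v : E}
    (hv : v ∉ (span 𝕜 s).topologicalClosure) :
    Module.rank 𝕜 ↥(span 𝕜 (insert v s))ᗮ + 1 = Module.rank 𝕜 ↥(span 𝕜 s)ᗮ := by
  set K := (span 𝕜 s)ᗮ
  set u := K.starProjection v with hu
  have hu₀ : u ≠ 0 := by
    intro h
    apply hv
    rw [← orthogonal_orthogonal_eq_closure]
    simpa [u, h] using K.sub_starProjection_mem_orthogonal v
  have hKv : K ⊓ (𝕜 ∙ v)ᗮ = K ⊓ (𝕜 ∙ u)ᗮ := by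
    ext z
    simp only [mem_inf, mem_orthogonal_singleton_iff_inner_right, and_congr_right_iff]
    intro hz
    rw [hu, inner_starProjection_left_eq_right, K.starProjection_eq_self_iff.2 hz]
  rw [span_insert, ← inf_orthogonal, inf_comm, hKv]
  exact rank_inf_orthogonal_singleton_add_one (K.starProjection_apply_mem v) hu₀

theorem notMem_topologicalClosure_sup_of_isOrtho {K L : Submodule 𝕜 E} (hKL : K ⟂ L) {v w : E}
    (hv : v ∈ Lᗮ) (hw : w ∈ Kᗮ) (hvw : ⟪v, w⟫_𝕜 ≠ 0) : v ∉ (K ⊔ L).topologicalClosure := by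
  intro hvKL
  set z := Lᗮ.starProjection w with hz
  have hwz : w - z ∈ Kᗮ := by
    have hcl : L.topologicalClosure ≤ Kᗮ :=
      L.topologicalClosure_minimal hKL.symm.le K.isClosed_orthogonal
    exact hcl (orthogonal_orthogonal_eq_closure L ▸ Lᗮ.sub_starProjection_mem_orthogonal w)
  have hzKL : z ∈ (K ⊔ L).topologicalClosureᗮ := by
    rw [orthogonal_closure, ← inf_orthogonal]
    exact ⟨by simpa using Kᗮ.sub_mem hw hwz, Lᗮ.starProjection_apply_mem w⟩
  have hvz : ⟪v, z⟫_𝕜 = ⟪v, w⟫_𝕜 := by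
    rw [hz, ← inner_starProjection_left_eq_right, Lᗮ.starProjection_eq_self_iff.2 hv]
  exact hvw (hvz ▸ inner_right_of_mem_orthogonal hvKL hzKL)

end

theorem IsBiorthogonal.isOrtho_span_image {E : Type*} [NormedAddCommGroup E]
    [InnerProductSpace ℂ E] {x y : ℕ → E} (hbi : IsBiorthogonal x y)
    {A B : Set ℕ} (hAB : Disjoint A B) : span ℂ (x '' A) ⟂ span ℂ (y '' B) := by
  rw [isOrtho_span]
  rintro _ ⟨k, hk, rfl⟩ _ ⟨j, hj, rfl⟩
  rw [hbi k j, if_neg (hAB.ne_of_mem hk hj)]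

theorem rank_orthogonal_clSpan_insert_add_one {s : Set H} {v : H} (hv : v ∉ clSpan s) :
    Module.rank ℂ ↥(clSpan (insert v s))ᗮ + 1 = Module.rank ℂ ↥(clSpan s)ᗮ := by
  rw [clSpan, clSpan, orthogonal_closure, orthogonal_closure]
  exact rank_orthogonal_span_insert_add_one hv

theorem IsBiorthogonal.defect_insert {x y : ℕ → H} (hbi : IsBiorthogonal x y) {N : Set ℕ}
    {n : ℕ} (hn : n ∉ N) :
    Module.rank ℂ ↥(clSpan (x '' insert n N ∪ y '' (insert n N)ᶜ))ᗮ =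
      Module.rank ℂ ↥(clSpan (x '' N ∪ y '' Nᶜ))ᗮ := by
  set M := Nᶜ \ {n}
  have hNM : Disjoint N M := disjoint_compl_right.mono_right Set.sdiff_subset
  have hxn : x n ∈ (span ℂ (y '' M))ᗮ :=
    (hbi.isOrtho_span_image (Set.disjoint_singleton_left.2 fun h => h.2 rfl)).le
      (subset_span (Set.mem_image_of_mem x rfl))
  have hyn : y n ∈ (span ℂ (x '' N))ᗮ :=
    (hbi.isOrtho_span_image (Set.disjoint_singleton_right.2 hn)).symm.le
      (subset_span (Set.mem_image_of_mem y rfl))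
  have hx : x n ∉ clSpan (x '' N ∪ y '' M) := by
    rw [clSpan, span_union]
    exact notMem_topologicalClosure_sup_of_isOrtho (hbi.isOrtho_span_image hNM) hxn hyn
      (by simp [hbi n n])
  have hy : y n ∉ clSpan (x '' N ∪ y '' M) := by
    rw [clSpan, span_union, sup_comm]
    exact notMem_topologicalClosure_sup_of_isOrtho (hbi.isOrtho_span_image hNM).symm hyn hxn
      (by rw [← inner_conj_symm, hbi n n]; simp)
  have hxS : x '' insert n N ∪ y '' (insert n N)ᶜ = insert (x n) (x '' N ∪ y '' M) := by
    have hM : (insert n N)ᶜ = M := by ext; simp [M, and_comm]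
    rw [hM, Set.image_insert_eq, Set.insert_union]
  have hyS : x '' N ∪ y '' Nᶜ = insert (y n) (x '' N ∪ y '' M) := by
    rw [← Set.insert_sdiff_self_of_mem (Set.mem_compl hn), Set.image_insert_eq, Set.union_insert]
  have h := (rank_orthogonal_clSpan_insert_add_one hx).trans
    (rank_orthogonal_clSpan_insert_add_one hy).symm
  rw [hxS, hyS]
  exact Cardinal.eq_of_add_eq_add_right h Cardinal.one_lt_aleph0

theorem Set.Finite.apply_union_eq {α β : Type*} {d : Set α → β}
    (hd : ∀ N n, n ∉ N → d (insert n N) = d N) {F : Set α} (hF : F.Finite) (N : Set α) :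
    d (N ∪ F) = d N := by
  induction F, hF using Set.Finite.induction_on generalizing N with
  | empty => rw [Set.union_empty]
  | @insert a F _ _ ih =>
    rw [Set.union_insert]
    by_cases ha : a ∈ N ∪ F
    · rw [Set.insert_eq_of_mem ha, ih]
    · rw [hd _ _ ha, ih]

theorem apply_eq_of_finite_symmDiff {α β : Type*} {d : Set α → β}
    (hd : ∀ N n, n ∉ N → d (insert n N) = d N) {N N' : Set α} (h : (symmDiff N N').Finite) :
    d N = d N' := by
  have h₁ : (N' \ N).Finite := h.subset Set.subset_union_right
  have h₂ : (N \ N').Finite := h.subset Set.subset_union_left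
  calc d N = d (N ∪ (N' \ N)) := (h₁.apply_union_eq hd N).symm
    _ = d (N' ∪ (N \ N')) := by rw [Set.union_sdiff_self, Set.union_sdiff_self, Set.union_comm]
    _ = d N' := h₂.apply_union_eq hd N'

/-- Changing a partition `ℕ = N₁ ⊔ N₂` in finitely many elements does not change the defect
of the mixed system, i.e. the dimension of the orthogonal complement of its closed span. -/
theorem defect_invariant_finite_change
    (x y : ℕ → H) (hbi : IsBiorthogonal x y)
    (N₁ N₁' : Set ℕ) (hfin : (symmDiff N₁ N₁').Finite) :
    Module.rank ℂ ↥((clSpan (x '' N₁ ∪ y '' N₁ᶜ))ᗮ) =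
      Module.rank ℂ ↥((clSpan (x '' N₁' ∪ y '' N₁'ᶜ))ᗮ) :=
  apply_eq_of_finite_symmDiff (d := fun N => Module.rank ℂ ↥(clSpan (x '' N ∪ y '' Nᶜ))ᗮ)
    (fun _ _ hn => hbi.defect_insert hn) hfin
end
end

section
/- Let {x_k} be a complete minimal system in H with biorthogonal {x_k*}, σ ⊆ ℕ, and for each m let σ_m = σ ∪ [m+1, ∞). Then the mixed system {x_k}_{k∈σ} ∪ {x_k*}_{k∈σ^c} is complete in H if and only if the intersection over all m of the closed linear spans H_{σ_m} = cl span{x_k : k ∈ σ_m} equals H_σ = cl span{x_k : k ∈ σ}. -/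
open Filter Topology

noncomputable section

variable {H : Type*} [NormedAddCommGroup H] [InnerProductSpace ℂ H] [CompleteSpace H]

/-!
Biorthogonality puts `H_τ` inside `N_τ = {x_j^* : j ∉ τ}ᗮ`, with equality when `τᶜ` is
finite: by completeness of `{x_k}`, a vector orthogonal to `H_τ` is then the finite
combination `∑_{j ∉ τ} ⟪x_j, h⟫ x_j^*`. Since every `σₘᶜ` is finite and `⋃ₘ σₘᶜ = σᶜ`,
this gives `⋂ₘ H_{σₘ} = N_σ`. The mixed system is complete iff `H_σᗮ ⊓ N_σ = ⊥`, which
for the closed subspace `H_σ ≤ N_σ` means `N_σ = H_σ`.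
-/

open Submodule

namespace Submodule

variable {𝕜 E : Type*} [RCLike 𝕜] [NormedAddCommGroup E] [InnerProductSpace 𝕜 E]

lemma mem_orthogonal_span_iff {s : Set E} {v : E} :
    v ∈ (span 𝕜 s)ᗮ ↔ ∀ u ∈ s, inner 𝕜 u v = 0 := by
  rw [← span_singleton_le_iff_mem, ← isOrtho_iff_le, isOrtho_comm, isOrtho_span]
  simp

lemma orthogonal_inf_eq_bot_iff {K N : Submodule 𝕜 E} [K.HasOrthogonalProjection] (h : K ≤ N) :
    Kᗮ ⊓ N = ⊥ ↔ N = K := by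
  constructor
  · intro hbot
    rw [← sup_orthogonal_inf_of_hasOrthogonalProjection h, hbot, sup_bot_eq]
  · rintro rfl
    rw [inf_comm, inf_orthogonal_eq_bot]

end Submodule

section

variable {E : Type*} [NormedAddCommGroup E] [InnerProductSpace ℂ E]

lemma IsCompleteSystem.eq_of_forall_inner_eq {x : ℕ → E} (hc : IsCompleteSystem x) {u v : E}
    (h : ∀ k, inner ℂ (x k) u = inner ℂ (x k) v) : u = v := by
  have hbot : (span ℂ (Set.range x))ᗮ = ⊥ := by
    rw [← orthogonal_closure, ← clSpan, hc, top_orthogonal_eq_bot]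
  rw [← sub_eq_zero, ← mem_bot ℂ, ← hbot, mem_orthogonal_span_iff]
  rintro _ ⟨k, rfl⟩
  rw [inner_sub_right, h, sub_self]

namespace IsBiorthogonal

variable {x y : ℕ → E}

lemma inner_sum (hbi : IsBiorthogonal x y) (s : Finset ℕ) (c : ℕ → ℂ) (k : ℕ) :
    inner ℂ (x k) (∑ j ∈ s, c j • y j) = if k ∈ s then c k else 0 := by
  simp [hbi k]

lemma clSpan_le_orthogonal_span (hbi : IsBiorthogonal x y) (τ : Set ℕ) :
    clSpan (x '' τ) ≤ (span ℂ (y '' τᶜ))ᗮ := by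
  refine topologicalClosure_minimal _ (isOrtho_iff_le.1 (isOrtho_span.2 ?_)) (isClosed_orthogonal _)
  rintro _ ⟨k, hk, rfl⟩ _ ⟨j, hj, rfl⟩
  rw [hbi k j, if_neg (ne_of_mem_of_not_mem hk hj)]

lemma orthogonal_clSpan_le_span (hc : IsCompleteSystem x) (hbi : IsBiorthogonal x y)
    {τ : Set ℕ} (hτ : τᶜ.Finite) : (clSpan (x '' τ))ᗮ ≤ span ℂ (y '' τᶜ) := by
  intro h hh
  have hexp : h = ∑ j ∈ hτ.toFinset, inner ℂ (x j) h • y j := by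
    refine hc.eq_of_forall_inner_eq fun k => ?_
    rw [hbi.inner_sum]
    split_ifs with hk
    · rfl
    · have hkτ : k ∈ τ := by simpa using hk
      exact inner_right_of_mem_orthogonal
        (le_topologicalClosure _ (subset_span (Set.mem_image_of_mem x hkτ))) hh
  rw [hexp]
  exact sum_mem fun j hj =>
    smul_mem _ _ (subset_span (Set.mem_image_of_mem y (hτ.mem_toFinset.1 hj)))

end IsBiorthogonal

end

lemma clSpan_union_eq_top_iff (s t : Set H) :
    clSpan (s ∪ t) = ⊤ ↔ (clSpan s)ᗮ ⊓ (span ℂ t)ᗮ = ⊥ := by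
  rw [clSpan, topologicalClosure_eq_top_iff, span_union, ← inf_orthogonal, clSpan,
    orthogonal_closure]

namespace IsBiorthogonal

variable {x y : ℕ → H}

lemma clSpan_eq_orthogonal_span (hc : IsCompleteSystem x) (hbi : IsBiorthogonal x y)
    {τ : Set ℕ} (hτ : τᶜ.Finite) : clSpan (x '' τ) = (span ℂ (y '' τᶜ))ᗮ := by
  refine le_antisymm (hbi.clSpan_le_orthogonal_span τ) ?_
  calc (span ℂ (y '' τᶜ))ᗮ ≤ (clSpan (x '' τ))ᗮᗮ :=
        orthogonal_le (hbi.orthogonal_clSpan_le_span hc hτ)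
    _ = clSpan (x '' τ) := orthogonal_orthogonal _

lemma iInf_clSpan_eq_orthogonal_span (hc : IsCompleteSystem x) (hbi : IsBiorthogonal x y)
    (σ : Set ℕ) :
    ⨅ m : ℕ, clSpan (x '' (σ ∪ {k | m ≤ k})) = (span ℂ (y '' σᶜ))ᗮ := by
  have hfin (m : ℕ) : (σ ∪ {k | m ≤ k})ᶜ.Finite :=
    (Set.finite_Iio m).subset fun k hk => by simp_all
  have hunion : ⋃ m : ℕ, (σ ∪ {k | m ≤ k})ᶜ = σᶜ := by
    ext k
    simp only [Set.mem_iUnion, Set.compl_union, Set.mem_inter_iff, Set.mem_compl_iff,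
      Set.mem_ofPred_eq, not_le]
    exact ⟨fun ⟨_, hk, _⟩ => hk, fun hk => ⟨k + 1, hk, k.lt_succ_self⟩⟩
  simp_rw [hbi.clSpan_eq_orthogonal_span hc (hfin _)]
  rw [iInf_orthogonal, ← span_iUnion, ← Set.image_iUnion, hunion]

end IsBiorthogonal

theorem mixed_complete_iff_iInf_spans_general
    (x y : ℕ → H) (hc : IsCompleteSystem x)
    (hbi : IsBiorthogonal x y) (σ : Set ℕ) :
    clSpan (x '' σ ∪ y '' σᶜ) = ⊤ ↔
      (⨅ m : ℕ, clSpan (x '' (σ ∪ {k | m ≤ k}))) = clSpan (x '' σ) := by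
  rw [hbi.iInf_clSpan_eq_orthogonal_span hc, clSpan_union_eq_top_iff]
  exact orthogonal_inf_eq_bot_iff (hbi.clSpan_le_orthogonal_span σ)

/-- For a complete minimal system `x` with biorthogonal `y` and `σ ⊆ ℕ`, the mixed system
`{x_k}_{k∈σ} ∪ {x_k^*}_{k∈σᶜ}` is complete iff `⋂ₘ H_{σₘ} = H_σ`, where
`σₘ = σ ∪ [m, ∞)`. -/
theorem mixed_complete_iff_iInf_spans [TopologicalSpace.SeparableSpace H]
    (x y : ℕ → H) (hc : IsCompleteSystem x) (hmin : IsMinimalSystem x)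
    (hbi : IsBiorthogonal x y) (σ : Set ℕ) :
    clSpan (x '' σ ∪ y '' σᶜ) = ⊤ ↔
      (⨅ m : ℕ, clSpan (x '' (σ ∪ {k | m ≤ k}))) = clSpan (x '' σ) :=
  mixed_complete_iff_iInf_spans_general x y hc hbi σ
end
end

section
/- A complete minimal system {x_k} in H is hereditarily complete if and only if for every σ ⊆ ℕ, the intersection over m of the closed spans H_{σ_m} (where σ_m = σ ∪ [m+1,∞)) equals H_σ; equivalently, if and only if the orthogonal projections onto H_{σ_m} converge pointwise to the projection onto H_σ for every σ. -/
open Filter Topology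

noncomputable section

variable {H : Type*} [NormedAddCommGroup H] [InnerProductSpace ℂ H] [CompleteSpace H]

/-! If `z ∈ ⨅ₘ H_{σₘ}`, then `⟪y k, z⟫ = 0` for `k ∉ σ`, since `⟪y k, ·⟫` vanishes on `H_{σ_{k+1}}`;
so hereditary completeness puts `z` in `H_σ`. Conversely, let `σ` be the support of the
coefficients `⟪y k, z⟫`. For each `m`, `H_{σₘ} + span {x k | k < m, k ∉ σ}` is closed (a closed
subspace plus a finite-dimensional one) and contains every `x k`, so it is `H`; the
finite-dimensional component of `z` has vanishing coefficients, hence is zero, and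
`z ∈ ⨅ₘ H_{σₘ} = H_σ`.

The projections onto a decreasing sequence of closed subspaces converge strongly to the
projection onto the intersection, and only the intersection can be such a limit; this turns the
first equivalence into the second. -/

open Submodule

section Projection

variable {𝕜 E ι : Type*} [RCLike 𝕜] [NormedAddCommGroup E] [InnerProductSpace 𝕜 E]
  [CompleteSpace E]

/- The decreasing case reduces to the increasing one, `starProjection_tendsto_closure_iSup`,
by passing to orthogonal complements. -/
theorem Submodule.starProjection_tendsto_iInf [Preorder ι] (K : ι → Submodule 𝕜 E)
    [∀ i, (K i).HasOrthogonalProjection] [(⨅ i, K i).HasOrthogonalProjection]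
    (hK : Antitone K) (v : E) :
    Tendsto (fun i => (K i).starProjection v) atTop (𝓝 ((⨅ i, K i).starProjection v)) := by
  have hclosure : (⨆ i, (K i)ᗮ).topologicalClosure = (⨅ i, K i)ᗮ := by
    rw [← orthogonal_orthogonal_eq_closure, ← iInf_orthogonal]
    simp only [orthogonal_orthogonal]
  have hcompl := starProjection_tendsto_closure_iSup (fun i => (K i)ᗮ)
    (fun i j hij => orthogonal_le (hK hij)) v
  simp only [hclosure] at hcompl
  simpa [starProjection_orthogonal] using (tendsto_const_nhds (x := v)).sub hcompl

theorem Submodule.iInf_eq_iff_tendsto_starProjection [SemilatticeSup ι] [Nonempty ι]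
    (K : ι → Submodule 𝕜 E) [∀ i, (K i).HasOrthogonalProjection] (hK : Antitone K)
    (L : Submodule 𝕜 E) [L.HasOrthogonalProjection] :
    (⨅ i, K i) = L ↔
      ∀ v, Tendsto (fun i => (K i).starProjection v) atTop (𝓝 (L.starProjection v)) := by
  refine ⟨fun h => ?_, fun h => le_antisymm (fun z hz => ?_) (fun z hz => ?_)⟩
  · subst h
    exact starProjection_tendsto_iInf K hK
  · have hfix : ∀ i, (K i).starProjection z = z :=
      fun i => starProjection_eq_self_iff.2 (mem_iInf K |>.1 hz i)
    have hlim := h z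
    simp only [hfix] at hlim
    exact starProjection_eq_self_iff.1 (tendsto_nhds_unique tendsto_const_nhds hlim).symm
  · have hlim := h z
    rw [starProjection_eq_self_iff.2 hz] at hlim
    refine (mem_iInf K).2 fun j => ?_
    have hclosed : IsClosed (K j : Set E) := orthogonal_orthogonal (K j) ▸ isClosed_orthogonal _
    exact hclosed.mem_of_tendsto hlim
      (eventually_atTop.2 ⟨j, fun i hij => hK hij (starProjection_apply_mem _ z)⟩)

end Projection

theorem Submodule.span_range_smul_eq_span_image {K M ι : Type*} [DivisionRing K] [AddCommGroup M]
    [Module K M] (c : ι → K) (v : ι → M) :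
    span K (Set.range fun i => c i • v i) = span K (v '' {i | c i ≠ 0}) := by
  refine le_antisymm (span_le.2 ?_) (span_le.2 ?_)
  · rintro _ ⟨i, rfl⟩
    by_cases hi : c i = 0
    · simp [hi]
    · exact smul_mem _ _ (subset_span ⟨i, hi, rfl⟩)
  · rintro _ ⟨i, hi, rfl⟩
    have hsmul : (c i)⁻¹ • c i • v i = v i := by rw [smul_smul, inv_mul_cancel₀ hi, one_smul]
    exact hsmul ▸ smul_mem _ _ (subset_span ⟨i, rfl⟩)

section Biorthogonal

omit [CompleteSpace H]

def IsHereditarilyComplete (x y : ℕ → H) : Prop :=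
  ∀ z : H, z ∈ clSpan (Set.range fun k => (inner ℂ (y k) z : ℂ) • x k)

lemma clSpan_mono {s t : Set H} (h : s ⊆ t) : clSpan s ≤ clSpan t :=
  topologicalClosure_mono (span_mono h)

lemma clSpan_le {s : Set H} {N : Submodule ℂ H} (hN : IsClosed (N : Set H))
    (h : s ⊆ N) : clSpan s ≤ N :=
  topologicalClosure_minimal _ (span_le.2 h) hN

lemma isHereditarilyComplete_iff_mem_clSpan_support {x y : ℕ → H} :
    IsHereditarilyComplete x y ↔ ∀ z : H, z ∈ clSpan (x '' {k | (inner ℂ (y k) z : ℂ) ≠ 0}) := by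
  simp only [IsHereditarilyComplete, clSpan, span_range_smul_eq_span_image]

namespace IsBiorthogonal

variable {x y : ℕ → H}

lemma inner_left (hbi : IsBiorthogonal x y) (j k : ℕ) :
    (inner ℂ (y j) (x k) : ℂ) = if k = j then 1 else 0 := by
  rw [← inner_conj_symm, hbi k j]
  split_ifs <;> simp

lemma inner_left_eq_zero_of_mem_clSpan (hbi : IsBiorthogonal x y) {τ : Set ℕ} {k : ℕ}
    (hk : k ∉ τ) {z : H} (hz : z ∈ clSpan (x '' τ)) : (inner ℂ (y k) z : ℂ) = 0 := by
  refine clSpan_le (ContinuousLinearMap.isClosed_ker (innerSL ℂ (y k))) ?_ hz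
  rintro _ ⟨j, hj, rfl⟩
  have hjk : j ≠ k := fun h => hk (h ▸ hj)
  simp [hbi.inner_left, hjk]

lemma inner_linearCombination (hbi : IsBiorthogonal x y) (l : ℕ →₀ ℂ) (k : ℕ) :
    (inner ℂ (y k) (Finsupp.linearCombination ℂ x l) : ℂ) = l k := by
  rw [Finsupp.linearCombination_apply, Finsupp.inner_sum]
  simp only [inner_smul_right, hbi.inner_left, mul_ite, mul_one, mul_zero]
  exact Finsupp.sum_ite_self_eq' l k

lemma eq_zero_of_mem_span (hbi : IsBiorthogonal x y) {F : Set ℕ} {f : H}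
    (hf : f ∈ span ℂ (x '' F)) (hzero : ∀ k ∈ F, (inner ℂ (y k) f : ℂ) = 0) : f = 0 := by
  obtain ⟨l, hl, rfl⟩ := Finsupp.mem_span_image_iff_linearCombination ℂ |>.1 hf
  suffices l = 0 by simp [this]
  ext k
  by_cases hk : k ∈ F
  · simpa [hbi.inner_linearCombination] using hzero k hk
  · exact Finsupp.notMem_support_iff.1 fun h => hk (hl h)

lemma mem_clSpan_compl (hc : IsCompleteSystem x) (hbi : IsBiorthogonal x y) {F : Set ℕ}
    (hF : F.Finite) {z : H} (hz : ∀ k ∈ F, (inner ℂ (y k) z : ℂ) = 0) :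
    z ∈ clSpan (x '' Fᶜ) := by
  have : FiniteDimensional ℂ (span ℂ (x '' F)) := FiniteDimensional.span_of_finite ℂ (hF.image x)
  have hsup : clSpan (x '' Fᶜ) ⊔ span ℂ (x '' F) = ⊤ := by
    refine top_unique (hc ▸ clSpan_le (isClosed_sup_finiteDimensional _ _
      (isClosed_topologicalClosure _)) ?_)
    rintro _ ⟨k, rfl⟩
    by_cases hk : k ∈ F
    · exact mem_sup_right (subset_span ⟨k, hk, rfl⟩)
    · exact mem_sup_left (le_topologicalClosure _ (subset_span ⟨k, hk, rfl⟩))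
  have hz' : z ∈ clSpan (x '' Fᶜ) ⊔ span ℂ (x '' F) := by rw [hsup]; exact Submodule.mem_top
  obtain ⟨s, hs, f, hf, rfl⟩ := mem_sup.1 hz'
  have hf0 : f = 0 := hbi.eq_zero_of_mem_span hf fun k hk => by
    have hsk := hbi.inner_left_eq_zero_of_mem_clSpan (not_not.2 hk) hs
    simpa [inner_add_right, hsk] using hz k hk
  simpa [hf0] using hs

end IsBiorthogonal

lemma antitone_clSpan_union_Ici (x : ℕ → H) (σ : Set ℕ) :
    Antitone fun m : ℕ => clSpan (x '' (σ ∪ {k | m ≤ k})) :=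
  fun _ _ hmn => clSpan_mono (Set.image_mono (Set.union_subset_union_right σ
    fun _ hk => hmn.trans hk))

theorem isHereditarilyComplete_iff_iInf_clSpan {x y : ℕ → H} (hc : IsCompleteSystem x)
    (hbi : IsBiorthogonal x y) :
    IsHereditarilyComplete x y ↔
      ∀ σ : Set ℕ, (⨅ m : ℕ, clSpan (x '' (σ ∪ {k | m ≤ k}))) = clSpan (x '' σ) := by
  rw [isHereditarilyComplete_iff_mem_clSpan_support]
  refine ⟨fun hhc σ => le_antisymm (fun z hz => ?_) ?_, fun h z => ?_⟩
  · refine clSpan_mono (Set.image_mono fun k hk => ?_) (hhc z)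
    by_contra hkσ
    refine hk (hbi.inner_left_eq_zero_of_mem_clSpan ?_ (mem_iInf _ |>.1 hz (k + 1)))
    simp [hkσ]
  · exact le_iInf fun m => clSpan_mono (Set.image_mono Set.subset_union_left)
  · set σ : Set ℕ := {k | (inner ℂ (y k) z : ℂ) ≠ 0}
    rw [← h σ]
    refine mem_iInf _ |>.2 fun m => ?_
    have hfin : (σ ∪ {k | m ≤ k})ᶜ.Finite :=
      (Set.finite_Iio m).subset fun k hk => Set.mem_Iio.2 (not_le.1 fun hmk => hk (Or.inr hmk))
    rw [← compl_compl (σ ∪ _)]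
    exact hbi.mem_clSpan_compl hc hfin fun k hk => not_not.1 fun hkσ => hk (Or.inl hkσ)

end Biorthogonal

theorem hereditarily_complete_iff_iInf_spans_general
    (x y : ℕ → H) (hc : IsCompleteSystem x)
    (hbi : IsBiorthogonal x y) :
    ((∀ z : H, z ∈ clSpan (Set.range fun k => (inner ℂ (y k) z : ℂ) • x k)) ↔
        ∀ σ : Set ℕ, (⨅ m : ℕ, clSpan (x '' (σ ∪ {k | m ≤ k}))) = clSpan (x '' σ)) ∧
    ((∀ z : H, z ∈ clSpan (Set.range fun k => (inner ℂ (y k) z : ℂ) • x k)) ↔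
        ∀ σ : Set ℕ, ∀ v : H,
          Tendsto (fun m => projS (x '' (σ ∪ {k | m ≤ k})) v) atTop
            (𝓝 (projS (x '' σ) v))) := by
  have hiff := isHereditarilyComplete_iff_iInf_clSpan hc hbi
  refine ⟨hiff, hiff.trans (forall_congr' fun σ => ?_)⟩
  exact iInf_eq_iff_tendsto_starProjection _ (antitone_clSpan_union_Ici x σ) _

/-- A complete minimal system `x` with biorthogonal `y` is hereditarily complete iff for every
`σ ⊆ ℕ` the intersection of the closed spans `H_{σₘ}` (with `σₘ = σ ∪ [m,∞)`) equals
`H_σ`; equivalently, iff the orthogonal projections onto `H_{σₘ}` converge pointwise to the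
projection onto `H_σ`, for every `σ`. -/
theorem hereditarily_complete_iff_iInf_spans [TopologicalSpace.SeparableSpace H]
    (x y : ℕ → H) (hc : IsCompleteSystem x) (hmin : IsMinimalSystem x)
    (hbi : IsBiorthogonal x y) :
    ((∀ z : H, z ∈ clSpan (Set.range fun k => (inner ℂ (y k) z : ℂ) • x k)) ↔
        ∀ σ : Set ℕ, (⨅ m : ℕ, clSpan (x '' (σ ∪ {k | m ≤ k}))) = clSpan (x '' σ)) ∧
    ((∀ z : H, z ∈ clSpan (Set.range fun k => (inner ℂ (y k) z : ℂ) • x k)) ↔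
        ∀ σ : Set ℕ, ∀ v : H,
          Tendsto (fun m => projS (x '' (σ ∪ {k | m ≤ k})) v) atTop
            (𝓝 (projS (x '' σ) v))) :=
  hereditarily_complete_iff_iInf_spans_general x y hc hbi
end
end

section
/- Let {x_k} be a normalized complete minimal system in H, and endow 𝔓(ℕ) with the metric ρ(σ,τ) = Σ_k |1_σ(k) − 1_τ(k)|/2^k, and the set of projections {P_σ} with the metric d_w(P,Q) = Σ_{k,j} |((P − Q)x_k, x_j)|/2^{k+j}. Then the inverse map P_σ ↦ σ is uniformly continuous from ({P_σ}, d_w) to (𝔓(ℕ), ρ). -/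
open Filter Topology

noncomputable section

variable {H : Type*} [NormedAddCommGroup H] [InnerProductSpace ℂ H] [CompleteSpace H]

/-- The metric `ρ` on subsets of `ℕ`. -/
def rhoMetric (σ τ : Set ℕ) : ℝ :=
  ∑' k : ℕ, |σ.indicator (fun _ => (1 : ℝ)) k - τ.indicator (fun _ => (1 : ℝ)) k| / 2 ^ k

/-- The weak-operator metric `d_w` determined by the system `x`. -/
def dW (x : ℕ → H) (P Q : H →L[ℂ] H) : ℝ :=
  ∑' p : ℕ × ℕ, ‖(inner ℂ ((P - Q) (x p.1)) (x p.2) : ℂ)‖ / 2 ^ (p.1 + p.2)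

/-!
The diagonal entry `((P_σ - P_τ) x_k, x_k)` with `k ∈ σ \ τ` equals `‖x_k - P_τ x_k‖²`, and since
`P_τ x_k` lies in the closed span of the other vectors this is at least `c_k²`, where `c_k > 0` is
the distance from `x_k` to that span (minimality). So `d_w(P_σ, P_τ) < min_{k ≤ N} c_k² / 4^k`
forces `σ` and `τ` to agree up to `N`, and then `ρ(σ, τ) ≤ 2^{-N}`.
-/

section Projection

variable {𝕜 E : Type*} [RCLike 𝕜] [NormedAddCommGroup E] [InnerProductSpace 𝕜 E]

theorem Submodule.inner_sub_starProjection_self (K : Submodule 𝕜 E) [K.HasOrthogonalProjection]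
    (v : E) : inner 𝕜 (v - K.starProjection v) v = (‖v - K.starProjection v‖ : 𝕜) ^ 2 := by
  calc inner 𝕜 (v - K.starProjection v) v
      = inner 𝕜 (v - K.starProjection v) (v - K.starProjection v)
        + inner 𝕜 (v - K.starProjection v) (K.starProjection v) := by
        rw [← inner_add_right, sub_add_cancel]
    _ = (‖v - K.starProjection v‖ : 𝕜) ^ 2 := by
        rw [K.starProjection_inner_eq_zero v _ (K.starProjection_apply_mem v), add_zero,
          inner_self_eq_norm_sq_to_K]

theorem Submodule.infDist_le_norm_sub_starProjection {K L : Submodule 𝕜 E}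
    [K.HasOrthogonalProjection] (hKL : K ≤ L) (v : E) :
    Metric.infDist v L ≤ ‖v - K.starProjection v‖ := by
  rw [← dist_eq_norm]
  exact Metric.infDist_le_dist_of_mem (hKL (K.starProjection_apply_mem v))

theorem summable_norm_inner_div_two_pow {x : ℕ → E} (hx : ∀ k, ‖x k‖ ≤ 1) (T : E →L[𝕜] E) :
    Summable fun p : ℕ × ℕ => ‖inner 𝕜 (T (x p.1)) (x p.2)‖ / 2 ^ (p.1 + p.2) := by
  have hgeom : Summable fun p : ℕ × ℕ => ‖T‖ * ((1 / 2 : ℝ) ^ p.1 * (1 / 2 : ℝ) ^ p.2) :=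
    (summable_geometric_two.mul_of_nonneg summable_geometric_two
      (fun _ => by positivity) (fun _ => by positivity)).mul_left _
  refine hgeom.of_nonneg_of_le (fun _ => by positivity) fun p => ?_
  have hentry : ‖inner 𝕜 (T (x p.1)) (x p.2)‖ ≤ ‖T‖ :=
    calc ‖inner 𝕜 (T (x p.1)) (x p.2)‖ ≤ ‖T (x p.1)‖ * ‖x p.2‖ := norm_inner_le_norm _ _
      _ ≤ ‖T‖ * 1 * 1 := by gcongr; exacts [T.le_opNorm_of_le (hx _), hx _]
      _ = ‖T‖ := by ring
  calc ‖inner 𝕜 (T (x p.1)) (x p.2)‖ / 2 ^ (p.1 + p.2) ≤ ‖T‖ / 2 ^ (p.1 + p.2) := by gcongr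
    _ = ‖T‖ * ((1 / 2 : ℝ) ^ p.1 * (1 / 2 : ℝ) ^ p.2) := by
        rw [pow_add, one_div_pow, one_div_pow]; field_simp

end Projection

theorem projS_eq_starProjection (s : Set H) : projS s = (clSpan s).starProjection := rfl

theorem IsMinimalSystem.infDist_pos {E : Type*} [NormedAddCommGroup E] [InnerProductSpace ℂ E]
    {x : ℕ → E} (hmin : IsMinimalSystem x) (k : ℕ) :
    0 < Metric.infDist (x k) (clSpan (x '' {j | j ≠ k})) :=
  ((Submodule.isClosed_topologicalClosure _).notMem_iff_infDist_pos
    ⟨0, Submodule.zero_mem _⟩).mp (hmin k)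

theorem norm_inner_div_le_dW {E : Type*} [NormedAddCommGroup E] [InnerProductSpace ℂ E]
    {x : ℕ → E} (hx : ∀ k, ‖x k‖ ≤ 1) (P Q : E →L[ℂ] E) (k j : ℕ) :
    ‖(inner ℂ ((P - Q) (x k)) (x j) : ℂ)‖ / 2 ^ (k + j) ≤ dW x P Q :=
  (summable_norm_inner_div_two_pow hx (P - Q)).le_tsum (k, j) fun _ _ => by positivity

theorem infDist_sq_le_norm_inner_projS_sub (x : ℕ → H) {σ τ : Set ℕ} {k : ℕ} (hkσ : k ∈ σ)
    (hkτ : k ∉ τ) :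
    Metric.infDist (x k) (clSpan (x '' {j | j ≠ k})) ^ 2
      ≤ ‖(inner ℂ ((projS (x '' σ) - projS (x '' τ)) (x k)) (x k) : ℂ)‖ := by
  have hxσ : projS (x '' σ) (x k) = x k :=
    Submodule.starProjection_eq_self_iff.mpr
      (Submodule.le_topologicalClosure _ (Submodule.subset_span ⟨k, hkσ, rfl⟩))
  have hτ_le : clSpan (x '' τ) ≤ clSpan (x '' {j | j ≠ k}) :=
    Submodule.topologicalClosure_mono <| Submodule.span_mono <|
      Set.image_mono fun j hj hjk => hkτ (hjk ▸ hj)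
  rw [sub_apply, hxσ, projS_eq_starProjection, Submodule.inner_sub_starProjection_self]
  simp only [Complex.coe_algebraMap, norm_pow, Complex.norm_real, norm_norm]
  exact pow_le_pow_left₀ Metric.infDist_nonneg
    (Submodule.infDist_le_norm_sub_starProjection hτ_le _) 2

theorem mem_iff_mem_of_dW_lt {x : ℕ → H} (hx : ∀ k, ‖x k‖ ≤ 1) {σ τ : Set ℕ} {k : ℕ}
    (hdW : dW x (projS (x '' σ)) (projS (x '' τ))
      < Metric.infDist (x k) (clSpan (x '' {j | j ≠ k})) ^ 2 / 2 ^ (k + k)) :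
    k ∈ σ ↔ k ∈ τ := by
  have hentry := norm_inner_div_le_dW hx (projS (x '' σ)) (projS (x '' τ)) k k
  by_contra hne
  refine hdW.not_ge (le_trans ?_ hentry)
  gcongr
  by_cases hkσ : k ∈ σ
  · exact infDist_sq_le_norm_inner_projS_sub x hkσ fun hkτ => hne (iff_of_true hkσ hkτ)
  · rw [← neg_sub, neg_apply, inner_neg_left, norm_neg]
    exact infDist_sq_le_norm_inner_projS_sub x (by tauto) hkσ

theorem rhoMetric_le_of_forall_le_mem_iff {σ τ : Set ℕ} {N : ℕ} (h : ∀ k ≤ N, (k ∈ σ ↔ k ∈ τ)) :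
    rhoMetric σ τ ≤ (1 / 2 : ℝ) ^ N := by
  set f : ℕ → ℝ := fun k =>
    |σ.indicator (fun _ => (1 : ℝ)) k - τ.indicator (fun _ => (1 : ℝ)) k| / 2 ^ k
  have hf_le : ∀ k, f k ≤ 1 / 2 ^ k := fun k => by
    simp only [f]
    gcongr
    by_cases hσ : k ∈ σ <;> by_cases hτ : k ∈ τ <;> simp [hσ, hτ]
  have hf_zero : ∀ k ≤ N, f k = 0 := fun k hk => by
    simp only [f, Set.indicator_const_eq_indicator_const (h k hk), sub_self, abs_zero, zero_div]
  have hf : Summable f := summable_geometric_two.of_nonneg_of_le (fun _ => by positivity)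
    fun k => (hf_le k).trans_eq (one_div_pow 2 k).symm
  calc rhoMetric σ τ = ∑' i, f (i + (N + 1)) := by
        rw [rhoMetric, ← hf.sum_add_tsum_nat_add (N + 1),
          Finset.sum_eq_zero fun k hk => hf_zero k (Nat.lt_succ_iff.mp (Finset.mem_range.mp hk)),
          zero_add]
    _ ≤ ∑' i, (1 / 2 : ℝ) ^ N / 2 / 2 ^ i := by
        have hgeom : ∀ i, (1 : ℝ) / 2 ^ (i + (N + 1)) = (1 / 2 : ℝ) ^ N / 2 / 2 ^ i := fun i => by
          rw [one_div_pow, pow_add, pow_succ]; field_simp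
        exact ((summable_nat_add_iff _).mpr hf).tsum_le_tsum
          (fun i => (hf_le _).trans_eq (hgeom i)) (summable_geometric_two' _)
    _ = (1 / 2 : ℝ) ^ N := tsum_geometric_two' _

theorem inverse_proj_map_uniformly_continuous_general
    (x : ℕ → H) (hmin : IsMinimalSystem x)
    (hnorm : ∀ k, ‖x k‖ = 1) :
    ∀ ε > 0, ∃ δ > 0, ∀ σ τ : Set ℕ,
      dW x (projS (x '' σ)) (projS (x '' τ)) < δ → rhoMetric σ τ < ε := by
  intro ε hε
  obtain ⟨N, hN⟩ := exists_pow_lt_of_lt_one hε (by norm_num : (1 / 2 : ℝ) < 1)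
  set δ := (Finset.Iic N).inf' Finset.nonempty_Iic fun k =>
    Metric.infDist (x k) (clSpan (x '' {j | j ≠ k})) ^ 2 / 2 ^ (k + k)
  have hδ : 0 < δ := (Finset.lt_inf'_iff _).mpr fun k _ => by
    have := hmin.infDist_pos k
    positivity
  refine ⟨δ, hδ, fun σ τ hdW => (rhoMetric_le_of_forall_le_mem_iff fun k hk => ?_).trans_lt hN⟩
  exact mem_iff_mem_of_dW_lt (fun k => (hnorm k).le)
    (hdW.trans_le (Finset.inf'_le _ (Finset.mem_Iic.mpr hk)))

/-- For a normalized complete minimal system, the inverse of `σ ↦ P_σ` is uniformly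
continuous from the projections with the weak-operator metric `d_w` to `𝔓(ℕ)` with `ρ`. -/
theorem inverse_proj_map_uniformly_continuous [TopologicalSpace.SeparableSpace H]
    (x : ℕ → H) (hc : IsCompleteSystem x) (hmin : IsMinimalSystem x)
    (hnorm : ∀ k, ‖x k‖ = 1) :
    ∀ ε > 0, ∃ δ > 0, ∀ σ τ : Set ℕ,
      dW x (projS (x '' σ)) (projS (x '' τ)) < δ → rhoMetric σ τ < ε :=
  inverse_proj_map_uniformly_continuous_general x hmin hnorm
end
end
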